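/- arXiv:cs/0605109 — 3 statements merged into one kernel-verified Lean document; each statement's English description precedes it below -/
import Mathlib

section
/- The maximal state of knowledge is unchanged by restricting to rules applicable to the initial knowledge: for every set of communication rules R and every initial state of knowledge k_0, f*_R(k_0) = f*_{R(k_0)}(k_0), where R(k_0) = {(p_b, x, p_a, k_a) ∈ R : {x} ∪ {v : (p_a, v) ∈ k_a} ⊆ Knowledge(k_0)}. -/
open scoped Classical

/-- A communication rule `(p_b, v, p_a, k_a)`. -/
abbrev Rule (P V : Type*) := P × V × P × Set (P × V)

/-- The knowledge-update operator
`f_R(k) = k ∪ {(p_a, v) : ∃ p_b k_a, (p_b, v) ∈ k, k_a ⊆ k, (p_b, v, p_a, k_a) ∈ R}`. -/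
def fR {P V : Type*} (R : Set (Rule P V)) (k : Set (P × V)) : Set (P × V) :=
  k ∪ {pv | ∃ pb ka, (pb, pv.2) ∈ k ∧ ka ⊆ k ∧ (pb, pv.2, pv.1, ka) ∈ R}

/-- `Knowledge(k) = {v : (p, v) ∈ k for some p}`. -/
def Knowledge {P V : Type*} (k : Set (P × V)) : Set V := {v | ∃ p, (p, v) ∈ k}

/-- The maximal state of knowledge `f*_R(k₀) = ⋃ₙ f_R^n(k₀)`. -/
def fStar {P V : Type*} (R : Set (Rule P V)) (k0 : Set (P × V)) : Set (P × V) :=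
  ⋃ n, (fR R)^[n] k0

/-- `R(k₀)`: the rules applicable to the initial knowledge. -/
def Rres {P V : Type*} (R : Set (Rule P V)) (k0 : Set (P × V)) : Set (Rule P V) :=
  {r ∈ R | r.2.1 ∈ Knowledge k0 ∧ ∀ v, (r.2.2.1, v) ∈ r.2.2.2 → v ∈ Knowledge k0}

/-! Communication only passes known values between principals, so the set of known values
never grows: every rule that actually fires along the iteration from `k₀` already has its value
and its required knowledge inside `Knowledge k₀`, i.e. it lies in `R(k₀)`. -/

section

variable {P V : Type*}

theorem Knowledge_fR (R : Set (Rule P V)) (k : Set (P × V)) :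
    Knowledge (fR R k) = Knowledge k := by
  ext v
  constructor
  · rintro ⟨p, hk | ⟨pb, -, hpb, -, -⟩⟩
    exacts [⟨p, hk⟩, ⟨pb, hpb⟩]
  · rintro ⟨p, hp⟩
    exact ⟨p, Or.inl hp⟩

theorem Knowledge_iterate_fR (R : Set (Rule P V)) (k : Set (P × V)) (n : ℕ) :
    Knowledge ((fR R)^[n] k) = Knowledge k := by
  induction n with
  | zero => rfl
  | succ n ih => rw [Function.iterate_succ_apply', Knowledge_fR, ih]

theorem fR_Rres_of_Knowledge_subset {R : Set (Rule P V)} {k k0 : Set (P × V)}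
    (hk : Knowledge k ⊆ Knowledge k0) : fR (Rres R k0) k = fR R k := by
  ext pv
  constructor
  · rintro (h | ⟨pb, ka, hpb, hka, hr, -⟩)
    exacts [Or.inl h, Or.inr ⟨pb, ka, hpb, hka, hr⟩]
  · rintro (h | ⟨pb, ka, hpb, hka, hr⟩)
    · exact Or.inl h
    · exact Or.inr ⟨pb, ka, hpb, hka, hr, hk ⟨pb, hpb⟩, fun v hv => hk ⟨pv.1, hka hv⟩⟩

theorem iterate_fR_Rres (R : Set (Rule P V)) (k0 : Set (P × V)) (n : ℕ) :
    (fR (Rres R k0))^[n] k0 = (fR R)^[n] k0 := by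
  induction n with
  | zero => rfl
  | succ n ih =>
    rw [Function.iterate_succ_apply', Function.iterate_succ_apply', ih,
      fR_Rres_of_Knowledge_subset (Knowledge_iterate_fR R k0 n).subset]

end

/-- the maximal state is unchanged under rule restriction. -/
theorem fStar_restrict {P V : Type*} (R : Set (Rule P V)) (k0 : Set (P × V)) :
    fStar R k0 = fStar (Rres R k0) k0 :=
  (Set.iUnion_congr (iterate_fR_Rres R k0)).symm
end

section
/- Merging adversaries does not lose knowledge in one step: for every set of communication rules R and every state of knowledge k, Merge(f_R(k)) ⊆ f_{Merge(R)}(Merge(k)). -/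
open scoped Classical

/-- Merge the adversary set `O` into the designated adversary `o`. -/
noncomputable def mergeP {P : Type*} (O : Set P) (o : P) (p : P) : P :=
  if p ∈ O then o else p

/-- Merge applied to a state of knowledge. -/
noncomputable def mergeK {P V : Type*} (O : Set P) (o : P) (k : Set (P × V)) :
    Set (P × V) :=
  (fun pv => (mergeP O o pv.1, pv.2)) '' k

/-- Merge applied to a set of rules. -/
noncomputable def mergeR {P V : Type*} (O : Set P) (o : P) (R : Set (Rule P V)) :
    Set (Rule P V) :=
  (fun r => (mergeP O o r.1, r.2.1, mergeP O o r.2.2.1, mergeK O o r.2.2.2)) '' R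

/-! Merging only renames principals, and renaming principals along any map `g` pushes every
application of a rule `(p_b, v, p_a, k_a)` to an application of the renamed rule
`(g p_b, v, g p_a, g k_a)`: its premises `(p_b, v) ∈ k` and `k_a ⊆ k` are carried along by the
image. -/

section Relabel

variable {P Q V : Type*}

def relabelK (g : P → Q) (k : Set (P × V)) : Set (Q × V) :=
  Prod.map g id '' k

def relabelR (g : P → Q) (R : Set (Rule P V)) : Set (Rule Q V) :=
  (fun r => (g r.1, r.2.1, g r.2.2.1, relabelK g r.2.2.2)) '' R

theorem relabelK_fR_subset (g : P → Q) (R : Set (Rule P V)) (k : Set (P × V)) :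
    relabelK g (fR R k) ⊆ fR (relabelR g R) (relabelK g k) := by
  rintro _ ⟨⟨p, v⟩, hpv, rfl⟩
  rcases hpv with hk | ⟨pb, ka, hb, hka, hr⟩
  · exact Or.inl (Set.mem_image_of_mem _ hk)
  · exact Or.inr ⟨g pb, relabelK g ka, Set.mem_image_of_mem (Prod.map g id) hb,
      Set.image_mono hka, Set.mem_image_of_mem _ hr⟩

theorem mergeK_eq_relabelK (O : Set P) (o : P) (k : Set (P × V)) :
    mergeK O o k = relabelK (mergeP O o) k :=
  rfl

theorem mergeR_eq_relabelR (O : Set P) (o : P) (R : Set (Rule P V)) :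
    mergeR O o R = relabelR (mergeP O o) R :=
  rfl

end Relabel

theorem merge_fR_general {P V : Type*} (R : Set (Rule P V)) (k : Set (P × V))
    (O : Set P) (o : P) :
    mergeK O o (fR R k) ⊆ fR (mergeR O o R) (mergeK O o k) := by
  simpa only [mergeK_eq_relabelK, mergeR_eq_relabelR] using relabelK_fR_subset (mergeP O o) R k

/-- merging adversaries does not lose knowledge in one step. -/
theorem merge_fR {P V : Type*} (R : Set (Rule P V)) (k : Set (P × V))
    (O : Set P) (o : P) (ho : o ∈ O) :
    mergeK O o (fR R k) ⊆ fR (mergeR O o R) (mergeK O o k) :=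
  merge_fR_general R k O o
end

section
/- Merging adversaries does not rule out any attacks: for every set of communication rules R and every initial state of knowledge k_0, Merge(f*_R(k_0)) ⊆ f*_{Merge(R)}(Merge(k_0)). -/
/-! Merging only relabels principals, so a rule of `R` that fires on `k` fires, relabelled, as a
rule of `Merge(R)` on `Merge(k)`: one step of `f_R` followed by `Merge` lands inside one step of
`f_{Merge(R)}`. Since `f_{Merge(R)}` is monotone, this inclusion propagates to every iterate. -/

open scoped Classical

theorem fR_mono {P V : Type*} (R : Set (Rule P V)) : Monotone (fR R) := by
  rintro k k' hk pv (hpv | ⟨pb, ka, hpb, hka, hr⟩)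
  · exact Or.inl (hk hpv)
  · exact Or.inr ⟨pb, ka, hk hpb, hka.trans hk, hr⟩

theorem mergeK_fR_subset {P V : Type*} (R : Set (Rule P V)) (O : Set P) (o : P)
    (k : Set (P × V)) : mergeK O o (fR R k) ⊆ fR (mergeR O o R) (mergeK O o k) := by
  rintro _ ⟨⟨pa, v⟩, (hpv | ⟨pb, ka, hpb, hka, hr⟩), rfl⟩
  · exact Or.inl ⟨(pa, v), hpv, rfl⟩
  · exact Or.inr ⟨mergeP O o pb, mergeK O o ka, ⟨(pb, v), hpb, rfl⟩,
      Set.image_mono hka, ⟨(pb, v, pa, ka), hr, rfl⟩⟩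

theorem merge_fStar_general {P V : Type*} (R : Set (Rule P V)) (k0 : Set (P × V))
    (O : Set P) (o : P) :
    mergeK O o (fStar R k0) ⊆ fStar (mergeR O o R) (mergeK O o k0) := by
  have merge_iterate : ∀ n, mergeK O o ((fR R)^[n] k0) ⊆
      (fR (mergeR O o R))^[n] (mergeK O o k0) := fun n =>
    (fR_mono _).le_iterate_comp_of_le (mergeK_fR_subset R O o) n k0
  rw [fStar, fStar, mergeK, Set.image_iUnion]
  exact Set.iUnion_mono merge_iterate

/-- merging adversaries does not rule out any attacks. -/
theorem merge_fStar {P V : Type*} (R : Set (Rule P V)) (k0 : Set (P × V))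
    (O : Set P) (o : P) (ho : o ∈ O) :
    mergeK O o (fStar R k0) ⊆ fStar (mergeR O o R) (mergeK O o k0) :=
  merge_fStar_general R k0 O o
end
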